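/- (Theorem 2.2) Let (p_n) and (q_n) be sequences with 0 < q_n < p_n ≤ 1 for all n, lim_{n→∞} p_n = 1 and lim_{n→∞} q_n = 1. Then for every modulus of continuity ω and every function f ∈ H_ω, the sequence of sup norms ‖L_n^{p_n,q_n}(f;·) − f‖ = sup_{x≥0} |L_n^{p_n,q_n}(f;x) − f(x)| converges statistically to 0. -/

import Mathlib

open Finset Filter
open scoped Classical

noncomputable section

/-- The `(p,q)`-integer `[n]_{p,q} = (p^n - q^n)/(p - q)`. -/
def pqInt (p q : ℝ) (n : ℕ) : ℝ := (p ^ n - q ^ n) / (p - q)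

/-- The `(p,q)`-factorial. -/
def pqFact (p q : ℝ) : ℕ → ℝ
  | 0 => 1
  | n + 1 => pqFact p q n * pqInt p q (n + 1)

/-- The `(p,q)`-binomial coefficient. -/
def pqBinom (p q : ℝ) (n k : ℕ) : ℝ :=
  pqFact p q n / (pqFact p q k * pqFact p q (n - k))

/-- `ℓ_n^{p,q}(x) = ∏_{s=0}^{n-1} (p^s + q^s x)`. -/
def pqEll (p q : ℝ) (n : ℕ) (x : ℝ) : ℝ :=
  ∏ s ∈ Finset.range n, (p ^ s + q ^ s * x)

/-- The node `p^{n-k+1}[k]_{p,q} / ([n-k+1]_{p,q} q^k)`. -/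
def pqNode (p q : ℝ) (n k : ℕ) : ℝ :=
  p ^ (n - k + 1) * pqInt p q k / (pqInt p q (n - k + 1) * q ^ k)

/-- The `(p,q)`-Bleimann–Butzer–Hahn operator. -/
def bbh (p q : ℝ) (n : ℕ) (f : ℝ → ℝ) (x : ℝ) : ℝ :=
  (p * q / pqEll p q n x) *
    ∑ k ∈ Finset.range (n + 1),
      f (pqNode p q n k) * p ^ ((n - k) * (n - k - 1) / 2) *
        q ^ (k * (k - 1) / 2) * pqBinom p q n k * x ^ k

/-- `δ_n(x)` from Theorem 3.1. -/
def pqDelta (p q : ℝ) (n : ℕ) (x : ℝ) : ℝ :=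
  (x / (1 + x)) ^ 2 *
      (p ^ 2 * q ^ 3 * pqInt p q n * pqInt p q (n - 1) / (pqInt p q (n + 1)) ^ 2 *
          ((1 + x) / (p + q * x)) -
        2 * p * q * pqInt p q n / pqInt p q (n + 1) + 1) +
    p ^ (n + 2) * q * pqInt p q n / (pqInt p q (n + 1)) ^ 2 * (x / (1 + x))

/-- Statistical convergence of a real sequence. -/
def StatConv (a : ℕ → ℝ) (l : ℝ) : Prop :=
  ∀ ε > (0 : ℝ), Tendsto (fun n : ℕ =>
    (((Finset.range (n + 1)).filter (fun k => ε ≤ |a k - l|)).card : ℝ) / n)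
    atTop (nhds 0)

/-- A modulus of continuity. -/
def IsModulus (ω : ℝ → ℝ) : Prop :=
  (∀ δ, 0 ≤ δ → 0 ≤ ω δ) ∧
  (∀ δ₁ δ₂, 0 ≤ δ₁ → δ₁ ≤ δ₂ → ω δ₁ ≤ ω δ₂) ∧
  (∀ δ₁ δ₂, 0 ≤ δ₁ → 0 ≤ δ₂ → ω (δ₁ + δ₂) ≤ ω δ₁ + ω δ₂) ∧
  Tendsto ω (nhdsWithin 0 (Set.Ioi 0)) (nhds 0)

/-- Membership in the class `H_ω`. -/
def MemHomega (ω f : ℝ → ℝ) : Prop :=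
  ∀ x y : ℝ, 0 ≤ x → 0 ≤ y → |f x - f y| ≤ ω |x / (1 + x) - y / (1 + y)|

/-- The modulus `ω̃(f; δ)`. -/
def omegaTilde (f : ℝ → ℝ) (δ : ℝ) : ℝ :=
  sSup {d | ∃ t x : ℝ, 0 ≤ t ∧ 0 ≤ x ∧ |t / (1 + t) - x / (1 + x)| ≤ δ ∧ d = |f t - f x|}

/-- The bivariate `(p,q)`-Bleimann–Butzer–Hahn operator. -/
def bbh2 (p₁ p₂ q₁ q₂ : ℝ) (n₁ n₂ : ℕ) (f : ℝ → ℝ → ℝ) (x y : ℝ) : ℝ :=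
  (p₁ * p₂ * q₁ * q₂ / (pqEll p₁ q₁ n₁ x * pqEll p₂ q₂ n₂ y)) *
    ∑ k₁ ∈ Finset.range (n₁ + 1), ∑ k₂ ∈ Finset.range (n₂ + 1),
      f (pqNode p₁ q₁ n₁ k₁) (pqNode p₂ q₂ n₂ k₂) *
        p₁ ^ ((n₁ - k₁) * (n₁ - k₁ - 1) / 2) * q₁ ^ (k₁ * (k₁ - 1) / 2) *
        p₂ ^ ((n₂ - k₂) * (n₂ - k₂ - 1) / 2) * q₂ ^ (k₂ * (k₂ - 1) / 2) *
        pqBinom p₁ q₁ n₁ k₁ * pqBinom p₂ q₂ n₂ k₂ * x ^ k₁ * y ^ k₂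

/-- Statistical convergence of a double real sequence (Pringsheim sense). -/
def StatConv2 (a : ℕ → ℕ → ℝ) (l : ℝ) : Prop :=
  ∀ ε > (0 : ℝ), Tendsto (fun N : ℕ × ℕ =>
    ((((Finset.range (N.1 + 1)) ×ˢ (Finset.range (N.2 + 1))).filter
        (fun jk => ε ≤ |a jk.1 jk.2 - l|)).card : ℝ) / (N.1 * N.2))
    atTop (nhds 0)

/-- A bivariate modulus of continuity. -/
def IsModulus2 (ω : ℝ → ℝ → ℝ) : Prop :=
  (∀ a b, 0 ≤ a → 0 ≤ b → 0 ≤ ω a b) ∧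
  (∀ a a' b, 0 ≤ a → a ≤ a' → 0 ≤ b → ω a b ≤ ω a' b) ∧
  (∀ a b b', 0 ≤ a → 0 ≤ b → b ≤ b' → ω a b ≤ ω a b') ∧
  (∀ a a' b, 0 ≤ a → 0 ≤ a' → 0 ≤ b → ω (a + a') b ≤ ω a b + ω a' b) ∧
  (∀ a b b', 0 ≤ a → 0 ≤ b → 0 ≤ b' → ω a (b + b') ≤ ω a b + ω a b') ∧
  Tendsto (fun d : ℝ × ℝ => ω d.1 d.2)
    (nhdsWithin (0, 0) (Set.Ioi 0 ×ˢ Set.Ioi 0)) (nhds 0)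

/-- Membership in the class `H_{ω₂}`. -/
def MemHomega2 (ω g : ℝ → ℝ → ℝ) : Prop :=
  ∀ u₁ v₁ u₂ v₂ : ℝ, 0 ≤ u₁ → 0 ≤ v₁ → 0 ≤ u₂ → 0 ≤ v₂ →
    |g u₁ v₁ - g u₂ v₂| ≤
      ω |u₁ / (1 + u₁) - u₂ / (1 + u₂)| |v₁ / (1 + v₁) - v₂ / (1 + v₂)|

/-- The bivariate modulus `ω̃(g; δ₁, δ₂)`. -/
def omegaTilde2 (g : ℝ → ℝ → ℝ) (δ₁ δ₂ : ℝ) : ℝ :=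
  sSup {d | ∃ t s x y : ℝ, 0 ≤ t ∧ 0 ≤ s ∧ 0 ≤ x ∧ 0 ≤ y ∧
    |t / (1 + t) - x / (1 + x)| ≤ δ₁ ∧ |s / (1 + s) - y / (1 + y)| ≤ δ₂ ∧
    d = |g t s - g x y|}

/-!
Up to the error `(p q - 1) f(x)`, `L_n(f; x) - f(x)` is `p q` times an average of
`f(node_k) - f(x)` with weights `pqCoeff n k * x ^ k / ℓ_n(x)`, which sum to `1` by the
`(p,q)`-binomial theorem. For `f ∈ H_ω` and `δ > 0`, each difference is at most
`ω(δ) (1 + d_k² / δ²)` with `d_k = node_k / (1 + node_k) - x / (1 + x)`. The averaged `d_k²` is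
computed in closed form by shifting indices in the `(p,q)`-binomial theorem, and is bounded uniformly
in `x ≥ 0` by `pqMomentBound p q n`, which tends to `0` when `p_n, q_n → 1`. Hence the sup norm
tends to `0`, and ordinary convergence implies statistical convergence.
-/

section PQInt

variable {p q : ℝ}

@[simp] lemma pqInt_zero : pqInt p q 0 = 0 := by simp [pqInt]

lemma pqInt_comm (n : ℕ) : pqInt p q n = pqInt q p n := by
  rw [pqInt, pqInt, ← neg_div_neg_eq, neg_sub, neg_sub]

lemma pqInt_add (hpq : p ≠ q) (k m : ℕ) :
    pqInt p q (k + m) = p ^ m * pqInt p q k + q ^ k * pqInt p q m := by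
  have := sub_ne_zero.2 hpq
  simp only [pqInt]
  field_simp
  ring

lemma pqInt_succ (hpq : p ≠ q) (n : ℕ) : pqInt p q (n + 1) = p * pqInt p q n + q ^ n := by
  simpa [pqInt, sub_ne_zero.2 hpq] using pqInt_add hpq n 1

lemma pqInt_succ' (hpq : p ≠ q) (n : ℕ) : pqInt p q (n + 1) = p ^ n + q * pqInt p q n := by
  simpa [pqInt, sub_ne_zero.2 hpq, add_comm] using pqInt_add hpq 1 n

lemma pqInt_eq_sum (hpq : p ≠ q) (n : ℕ) :
    pqInt p q n = ∑ i ∈ range n, p ^ i * q ^ (n - 1 - i) := by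
  rw [pqInt, ← geom_sum₂_mul, mul_div_cancel_right₀ _ (sub_ne_zero.2 hpq)]

variable (hq : 0 ≤ q) (hqp : q < p)
include hq hqp

lemma pqInt_pos {n : ℕ} (hn : 0 < n) : 0 < pqInt p q n :=
  div_pos (sub_pos.2 (pow_lt_pow_left₀ hqp hq hn.ne')) (sub_pos.2 hqp)

lemma pqInt_nonneg (n : ℕ) : 0 ≤ pqInt p q n := by
  rcases n.eq_zero_or_pos with rfl | hn
  · simp
  · exact (pqInt_pos hq hqp hn).le

lemma natCast_mul_pow_le_pqInt (n : ℕ) : (n : ℝ) * q ^ (n - 1) ≤ pqInt p q n := by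
  rw [pqInt_eq_sum hqp.ne']
  calc (n : ℝ) * q ^ (n - 1) = #(range n) • q ^ (n - 1) := by simp
    _ ≤ _ := card_nsmul_le_sum _ _ _ fun i hi => ?_
  calc q ^ (n - 1) = q ^ i * q ^ (n - 1 - i) := by
        rw [← pow_add, Nat.add_sub_cancel' (by grind)]
    _ ≤ p ^ i * q ^ (n - 1 - i) := by gcongr

-- Keep only the first `m` terms of `[n] = ∑ q^i p^(n-1-i)`.
lemma natCast_mul_pow_mul_pow_le_pqInt (hp : p ≤ 1) {m n : ℕ} (hmn : m ≤ n) :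
    (m : ℝ) * (q ^ m * p ^ n) ≤ pqInt p q n := by
  have hq1 : q ≤ 1 := hqp.le.trans hp
  rw [pqInt_comm, pqInt_eq_sum hqp.ne]
  calc (m : ℝ) * (q ^ m * p ^ n) = #(range m) • (q ^ m * p ^ n) := by simp
    _ ≤ ∑ i ∈ range m, q ^ i * p ^ (n - 1 - i) := card_nsmul_le_sum _ _ _ fun i hi => ?_
    _ ≤ _ := sum_le_sum_of_subset_of_nonneg (range_mono hmn) fun i _ _ => by
          have := hq.trans hqp.le
          positivity
  have him : i < m := mem_range.1 hi
  exact mul_le_mul (pow_le_pow_of_le_one hq hq1 him.le)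
    (pow_le_pow_of_le_one (hq.trans hqp.le) hp (by omega)) (pow_nonneg (hq.trans hqp.le) _)
    (by positivity)

end PQInt

lemma Nat.succ_mul_div_two (m : ℕ) : (m + 1) * m / 2 = m * (m - 1) / 2 + m := by
  simpa using Nat.triangle_succ m

section PQBinom

variable {p q : ℝ} (hq : 0 ≤ q) (hqp : q < p)
include hq hqp

lemma pqFact_pos (n : ℕ) : 0 < pqFact p q n := by
  induction n with
  | zero => simp [pqFact]
  | succ n ih => exact mul_pos ih (pqInt_pos hq hqp n.succ_pos)

@[simp] lemma pqBinom_zero_right (n : ℕ) : pqBinom p q n 0 = 1 := by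
  simp [pqBinom, pqFact, (pqFact_pos hq hqp n).ne']

@[simp] lemma pqBinom_self (n : ℕ) : pqBinom p q n n = 1 := by
  simp [pqBinom, pqFact, (pqFact_pos hq hqp n).ne']

lemma pqBinom_pos (n k : ℕ) : 0 < pqBinom p q n k :=
  div_pos (pqFact_pos hq hqp n) (mul_pos (pqFact_pos hq hqp k) (pqFact_pos hq hqp _))

lemma pqInt_succ_mul_pqBinom_succ (m j : ℕ) :
    pqInt p q (j + 1) * pqBinom p q (m + 1) (j + 1) = pqInt p q (m + 1) * pqBinom p q m j := by
  have := (pqFact_pos hq hqp j).ne'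
  have := (pqFact_pos hq hqp (m - j)).ne'
  have := (pqInt_pos hq hqp j.succ_pos).ne'
  simp only [pqBinom, pqFact, Nat.add_sub_add_right]
  field_simp

lemma pqBinom_succ_succ (j m : ℕ) :
    pqBinom p q (j + m + 2) (j + 1) =
      p ^ (j + 1) * pqBinom p q (j + m + 1) (j + 1) + q ^ (m + 1) * pqBinom p q (j + m + 1) j := by
  have hsplit := pqInt_add hqp.ne' (m + 1) (j + 1)
  have := (pqFact_pos hq hqp j).ne'
  have := (pqFact_pos hq hqp m).ne'
  have := (pqInt_pos hq hqp j.succ_pos).ne'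
  have := (pqInt_pos hq hqp m.succ_pos).ne'
  rw [show m + 1 + (j + 1) = j + m + 2 by omega] at hsplit
  simp only [pqBinom, show j + m + 2 - (j + 1) = m + 1 by omega,
    show j + m + 1 - (j + 1) = m by omega, show j + m + 1 - j = m + 1 by omega]
  simp only [pqFact, hsplit]
  field_simp

end PQBinom

def pqCoeff (p q : ℝ) (n k : ℕ) : ℝ :=
  p ^ ((n - k) * (n - k - 1) / 2) * q ^ (k * (k - 1) / 2) * pqBinom p q n k

section PQCoeff

variable {p q : ℝ} (hq : 0 ≤ q) (hqp : q < p)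
include hq hqp

lemma pqCoeff_nonneg (n k : ℕ) : 0 ≤ pqCoeff p q n k := by
  have := pqBinom_pos hq hqp n k
  have := hq.trans hqp.le
  unfold pqCoeff
  positivity

lemma pqCoeff_succ_zero (n : ℕ) : pqCoeff p q (n + 1) 0 = p ^ n * pqCoeff p q n 0 := by
  simp only [pqCoeff, Nat.sub_zero, Nat.add_sub_cancel, Nat.succ_mul_div_two, pow_add,
    pqBinom_zero_right hq hqp]
  ring

lemma pqCoeff_succ_self (n : ℕ) : pqCoeff p q (n + 1) (n + 1) = q ^ n * pqCoeff p q n n := by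
  simp only [pqCoeff, Nat.sub_self, Nat.add_sub_cancel, Nat.succ_mul_div_two, pow_add,
    pqBinom_self hq hqp]
  ring

lemma pqCoeff_succ_succ {i n : ℕ} (hin : i < n) :
    pqCoeff p q (n + 1) (i + 1) = p ^ n * pqCoeff p q n (i + 1) + q ^ n * pqCoeff p q n i := by
  obtain ⟨s, rfl⟩ : ∃ s, n = i + s + 1 := ⟨n - i - 1, by omega⟩
  simp only [pqCoeff, show i + s + 1 + 1 - (i + 1) = s + 1 by omega,
    show i + s + 1 - (i + 1) = s by omega, show i + s + 1 - i = s + 1 by omega,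
    Nat.add_sub_cancel, pqBinom_succ_succ hq hqp i s, Nat.succ_mul_div_two]
  ring

lemma pqCoeff_mul_pqInt (m j : ℕ) :
    pqCoeff p q (m + 1) (j + 1) * pqInt p q (j + 1) =
      pqInt p q (m + 1) * q ^ j * pqCoeff p q m j := by
  simp only [pqCoeff, Nat.add_sub_add_right, Nat.add_sub_cancel, Nat.succ_mul_div_two, pow_add]
  linear_combination (p ^ ((m - j) * (m - j - 1) / 2) * q ^ (j * (j - 1) / 2) * q ^ j) *
    pqInt_succ_mul_pqBinom_succ hq hqp m j

theorem prod_pow_mul_add_pow_mul (m : ℕ) (a b : ℝ) :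
    ∏ s ∈ range m, (p ^ s * a + q ^ s * b) =
      ∑ k ∈ range (m + 1), pqCoeff p q m k * a ^ (m - k) * b ^ k := by
  induction m with
  | zero => simp [pqCoeff, pqBinom_zero_right hq hqp]
  | succ m ih =>
    set S := ∑ k ∈ range (m + 1), pqCoeff p q m k * a ^ (m - k) * b ^ k
    have hS₁ : S = ∑ k ∈ range m, pqCoeff p q m (k + 1) * a ^ (m - (k + 1)) * b ^ (k + 1) +
        pqCoeff p q m 0 * a ^ m := by simp [S, sum_range_succ']
    have hS₂ : S = ∑ k ∈ range m, pqCoeff p q m k * a ^ (m - k) * b ^ k +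
        pqCoeff p q m m * b ^ m := by simp [S, sum_range_succ]
    have hmid : ∑ k ∈ range m, pqCoeff p q (m + 1) (k + 1) * a ^ (m + 1 - (k + 1)) * b ^ (k + 1) =
        p ^ m * a * ∑ k ∈ range m, pqCoeff p q m (k + 1) * a ^ (m - (k + 1)) * b ^ (k + 1) +
          q ^ m * b * ∑ k ∈ range m, pqCoeff p q m k * a ^ (m - k) * b ^ k := by
      rw [mul_sum, mul_sum, ← sum_add_distrib]
      refine sum_congr rfl fun k hk => ?_
      have hkm : k < m := mem_range.1 hk
      rw [pqCoeff_succ_succ hq hqp hkm, Nat.add_sub_add_right,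
        show m - k = m - (k + 1) + 1 by omega]
      ring
    rw [prod_range_succ, ih, sum_range_succ' _ (m + 1), sum_range_succ, hmid,
      pqCoeff_succ_zero hq hqp, pqCoeff_succ_self hq hqp, Nat.sub_zero, Nat.sub_self]
    linear_combination (p ^ m * a) * hS₁ + (q ^ m * b) * hS₂

end PQCoeff

lemma pqEll_one (p q x : ℝ) : pqEll p q 1 x = 1 + x := by simp [pqEll]

lemma pqEll_two (p q x : ℝ) : pqEll p q 2 x = (1 + x) * (p + q * x) := by
  simp [pqEll, prod_range_succ]

section Moments

variable {p q : ℝ} (hq : 0 ≤ q) (hqp : q < p)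
include hq hqp

theorem sum_pqCoeff_mul_pow (n : ℕ) (x : ℝ) :
    ∑ k ∈ range (n + 1), pqCoeff p q n k * x ^ k = pqEll p q n x := by
  simpa [pqEll] using (prod_pow_mul_add_pow_mul hq hqp n 1 x).symm

lemma pqEll_add (r m : ℕ) (x : ℝ) :
    pqEll p q (r + m) x = pqEll p q r x *
      ∑ k ∈ range (m + 1), pqCoeff p q m k * (p ^ r) ^ (m - k) * (q ^ r * x) ^ k := by
  rw [← prod_pow_mul_add_pow_mul hq hqp, pqEll, pqEll, prod_range_add]
  congr 1
  refine prod_congr rfl fun s _ => ?_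
  ring

lemma sum_pqCoeff_mul_pqInt (m : ℕ) (g : ℕ → ℝ) :
    ∑ k ∈ range (m + 2), pqCoeff p q (m + 1) k * pqInt p q k * g k =
      pqInt p q (m + 1) * ∑ j ∈ range (m + 1), q ^ j * pqCoeff p q m j * g (j + 1) := by
  rw [sum_range_succ', mul_sum]
  simp only [pqInt_zero, mul_zero, zero_mul, add_zero, pqCoeff_mul_pqInt hq hqp]
  exact sum_congr rfl fun j _ => by ring

lemma sum_pqCoeff_mul_pqInt_mul_pow (n : ℕ) (x : ℝ) :
    (1 + x) * ∑ k ∈ range (n + 1), pqCoeff p q n k * pqInt p q k * (p ^ (n - k + 1) * x ^ k) =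
      pqInt p q n * p * x * pqEll p q n x := by
  rcases n with _ | m
  · simp
  have hsum : ∑ j ∈ range (m + 1),
      q ^ j * pqCoeff p q m j * (p ^ (m + 1 - (j + 1) + 1) * x ^ (j + 1)) =
        p * x * ∑ j ∈ range (m + 1), pqCoeff p q m j * (p ^ 1) ^ (m - j) * (q ^ 1 * x) ^ j := by
    rw [mul_sum]
    exact sum_congr rfl fun j _ => by rw [Nat.add_sub_add_right]; ring
  have hell := pqEll_add hq hqp 1 m x
  rw [add_comm 1 m, pqEll_one] at hell
  rw [sum_pqCoeff_mul_pqInt hq hqp, hsum, hell]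
  ring

lemma sum_pqCoeff_mul_pqInt_mul_pow_pow (n : ℕ) (x : ℝ) :
    (1 + x) * (p + q * x) * ∑ k ∈ range (n + 1),
        pqCoeff p q n k * pqInt p q k * ((p ^ (n - k + 1)) ^ 2 * q ^ (k - 1) * x ^ k) =
      pqInt p q n * p ^ 2 * x * (p ^ n + q ^ n * x) * pqEll p q n x := by
  rcases n with _ | m
  · simp
  have hsum : ∑ j ∈ range (m + 1),
      q ^ j * pqCoeff p q m j * ((p ^ (m + 1 - (j + 1) + 1)) ^ 2 * q ^ (j + 1 - 1) * x ^ (j + 1)) =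
        p ^ 2 * x * ∑ j ∈ range (m + 1), pqCoeff p q m j * (p ^ 2) ^ (m - j) * (q ^ 2 * x) ^ j := by
    rw [mul_sum]
    exact sum_congr rfl fun j _ => by rw [Nat.add_sub_add_right, Nat.add_sub_cancel]; ring
  have hell : pqEll p q (2 + m) x = pqEll p q (m + 1) x * (p ^ (m + 1) + q ^ (m + 1) * x) := by
    rw [add_comm, pqEll, pqEll, prod_range_succ]
  have hadd := pqEll_add hq hqp 2 m x
  rw [hell, pqEll_two] at hadd
  rw [sum_pqCoeff_mul_pqInt hq hqp, hsum]
  linear_combination (pqInt p q (m + 1) * p ^ 2 * x) * hadd.symm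

lemma sum_pqCoeff_mul_pqInt_mul_pqInt_pred (n : ℕ) (x : ℝ) :
    (1 + x) * (p + q * x) * ∑ k ∈ range (n + 1),
        pqCoeff p q n k * pqInt p q k * ((p ^ (n - k + 1)) ^ 2 * p * pqInt p q (k - 1) * x ^ k) =
      q * p ^ 3 * pqInt p q n * pqInt p q (n - 1) * x ^ 2 * pqEll p q n x := by
  rcases n with _ | _ | m
  · simp
  · simp [sum_range_succ]
  have hsum₁ : ∑ j ∈ range (m + 2), q ^ j * pqCoeff p q (m + 1) j *
      ((p ^ (m + 2 - (j + 1) + 1)) ^ 2 * p * pqInt p q (j + 1 - 1) * x ^ (j + 1)) =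
        ∑ j ∈ range (m + 2), pqCoeff p q (m + 1) j * pqInt p q j *
          (q ^ j * (p ^ (m + 1 - j + 1)) ^ 2 * p * x ^ (j + 1)) :=
    sum_congr rfl fun j _ => by
      rw [Nat.add_sub_cancel, show m + 2 - (j + 1) = m + 1 - j by omega]
      ring
  have hsum₂ : ∑ i ∈ range (m + 1), q ^ i * pqCoeff p q m i *
      (q ^ (i + 1) * (p ^ (m + 1 - (i + 1) + 1)) ^ 2 * p * x ^ (i + 1 + 1)) =
        q * p ^ 3 * x ^ 2 *
          ∑ i ∈ range (m + 1), pqCoeff p q m i * (p ^ 2) ^ (m - i) * (q ^ 2 * x) ^ i := by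
    rw [mul_sum]
    exact sum_congr rfl fun i _ => by rw [Nat.add_sub_add_right]; ring
  rw [sum_pqCoeff_mul_pqInt hq hqp, hsum₁, sum_pqCoeff_mul_pqInt hq hqp, hsum₂,
    Nat.add_sub_cancel, show m + 1 + 1 = 2 + m by ring, pqEll_add hq hqp, pqEll_two]
  ring


lemma sum_pqCoeff_mul_sq_pow (n : ℕ) (x : ℝ) :
    (1 + x) * (p + q * x) * ∑ k ∈ range (n + 1),
        pqCoeff p q n k * (p ^ (n - k + 1) * pqInt p q k) ^ 2 * x ^ k =
      (pqInt p q n * p ^ 2 * x * (p ^ n + q ^ n * x) +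
        q * p ^ 3 * pqInt p q n * pqInt p q (n - 1) * x ^ 2) * pqEll p q n x := by
  have hsplit : ∀ k, pqCoeff p q n k * (p ^ (n - k + 1) * pqInt p q k) ^ 2 * x ^ k =
      pqCoeff p q n k * pqInt p q k * ((p ^ (n - k + 1)) ^ 2 * q ^ (k - 1) * x ^ k) +
        pqCoeff p q n k * pqInt p q k *
          ((p ^ (n - k + 1)) ^ 2 * p * pqInt p q (k - 1) * x ^ k) := by
    rintro (_ | k)
    · simp
    · rw [Nat.add_sub_cancel, pqInt_succ hqp.ne']
      ring
  rw [sum_congr rfl fun k _ => hsplit k, sum_add_distrib, mul_add,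
    sum_pqCoeff_mul_pqInt_mul_pow_pow hq hqp, sum_pqCoeff_mul_pqInt_mul_pqInt_pred hq hqp]
  ring

-- `p^(n-k+1) [k] / [n+1]` is `node_k / (1 + node_k)`, so the sum is `((1 + x) [n+1])²` times the
-- second moment of `node_k / (1 + node_k) - x / (1 + x)` against the weights `pqCoeff n k * x^k`.
lemma pqCentralMoment_eq (n : ℕ) (x : ℝ) :
    (p + q * x) * ∑ k ∈ range (n + 1), pqCoeff p q n k * x ^ k *
        ((1 + x) * (p ^ (n - k + 1) * pqInt p q k) - x * pqInt p q (n + 1)) ^ 2 =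
      pqEll p q n x * ((1 + x) * (pqInt p q n * p ^ 2 * x * (p ^ n + q ^ n * x) +
          q * p ^ 3 * pqInt p q n * pqInt p q (n - 1) * x ^ 2) -
        2 * x ^ 2 * (p + q * x) * pqInt p q (n + 1) * (pqInt p q n * p) +
        x ^ 2 * pqInt p q (n + 1) ^ 2 * (p + q * x)) := by
  have hexp : ∀ k ∈ range (n + 1), pqCoeff p q n k * x ^ k *
      ((1 + x) * (p ^ (n - k + 1) * pqInt p q k) - x * pqInt p q (n + 1)) ^ 2 =
        (1 + x) ^ 2 * (pqCoeff p q n k * (p ^ (n - k + 1) * pqInt p q k) ^ 2 * x ^ k) -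
          2 * x * (1 + x) * pqInt p q (n + 1) *
            (pqCoeff p q n k * pqInt p q k * (p ^ (n - k + 1) * x ^ k)) +
          x ^ 2 * pqInt p q (n + 1) ^ 2 * (pqCoeff p q n k * x ^ k) :=
    fun k _ => by ring
  rw [sum_congr rfl hexp, sum_add_distrib, sum_sub_distrib, ← mul_sum, ← mul_sum, ← mul_sum,
    sum_pqCoeff_mul_pow hq hqp]
  linear_combination (1 + x) * sum_pqCoeff_mul_sq_pow hq hqp n x -
    2 * x * (p + q * x) * pqInt p q (n + 1) * sum_pqCoeff_mul_pqInt_mul_pow hq hqp n x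

end Moments

def pqMomentBound (p q : ℝ) (n : ℕ) : ℝ :=
  ((p ^ n / pqInt p q n + (p - q)) / q) ^ 2 + 1 / (q ^ 2 * n) + p * p ^ n / (q ^ 2 * pqInt p q n)

section MomentBound

variable {p q : ℝ} (hq : 0 < q) (hqp : q < p)
include hq hqp

lemma pqMomentBound_nonneg (n : ℕ) : 0 ≤ pqMomentBound p q n := by
  have := pqInt_nonneg hq.le hqp n
  have := hq.trans hqp
  unfold pqMomentBound
  positivity

lemma mul_pqInt_le_pqInt_succ (n : ℕ) : q * pqInt p q n ≤ pqInt p q (n + 1) := by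
  rw [pqInt_succ' hqp.ne']
  exact le_add_of_nonneg_left (pow_pos (hq.trans hqp) n).le

lemma sq_mul_sq_pqInt_le (n : ℕ) : q ^ 2 * pqInt p q n ^ 2 ≤ pqInt p q (n + 1) ^ 2 := by
  rw [← mul_pow]
  have := pqInt_nonneg hq.le hqp n
  exact pow_le_pow_left₀ (by positivity) (mul_pqInt_le_pqInt_succ hq hqp n) 2

lemma natCast_mul_pow_mul_pqInt_le (n : ℕ) :
    n * q ^ (n + 1) * pqInt p q n ≤ pqInt p q (n + 1) ^ 2 := by
  rcases n with _ | m
  · simpa using sq_nonneg _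
  calc ((m + 1 : ℕ) : ℝ) * q ^ (m + 1 + 1) * pqInt p q (m + 1)
      = ((m + 1 : ℕ) : ℝ) * q ^ m * (q ^ 2 * pqInt p q (m + 1)) := by ring
    _ ≤ pqInt p q (m + 1) * (q ^ 2 * pqInt p q (m + 1)) := by
        have := pqInt_nonneg hq.le hqp (m + 1)
        gcongr
        simpa using natCast_mul_pow_le_pqInt hq.le hqp (m + 1)
    _ ≤ _ := by linarith [sq_mul_sq_pqInt_le hq hqp (m + 1)]

-- `q (1 + x) ≤ p + q x` and `p [n-1] ≤ [n]` complete the remainder to a square.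
lemma pqMoment_remainder_sq_le {n : ℕ} (hn : 1 ≤ n) {x : ℝ} (hx : 0 ≤ x) :
    (1 + x) * (q * p ^ 3 * pqInt p q n * pqInt p q (n - 1) * x ^ 2) -
        2 * x ^ 2 * (p + q * x) * pqInt p q (n + 1) * (pqInt p q n * p) +
        x ^ 2 * pqInt p q (n + 1) ^ 2 * (p + q * x) ≤
      (p + q * x) * (x * (p ^ n + (p - q) * pqInt p q n)) ^ 2 := by
  obtain ⟨m, rfl⟩ : ∃ m, n = m + 1 := ⟨n - 1, by omega⟩
  have hp0 : 0 < p := hq.trans hqp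
  have hI := pqInt_nonneg hq.le hqp (m + 1)
  have hJ := pqInt_nonneg hq.le hqp m
  have hqY : q * (1 + x) ≤ p + q * x := by linarith
  have hpJ : p * pqInt p q m ≤ pqInt p q (m + 1) := by
    rw [pqInt_succ hqp.ne']; linarith [pow_pos hq m]
  have hcross : (1 + x) * (q * p ^ 3 * pqInt p q (m + 1) * pqInt p q m * x ^ 2) ≤
      (p + q * x) * (p * pqInt p q (m + 1)) ^ 2 * x ^ 2 :=
    calc _ = (q * (1 + x)) * (p * pqInt p q m) * (p ^ 2 * pqInt p q (m + 1) * x ^ 2) := by ring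
      _ ≤ (p + q * x) * pqInt p q (m + 1) * (p ^ 2 * pqInt p q (m + 1) * x ^ 2) := by gcongr
      _ = _ := by ring
  have hdev : (pqInt p q (m + 1 + 1) - p * pqInt p q (m + 1)) ^ 2 ≤
      (p ^ (m + 1) + (p - q) * pqInt p q (m + 1)) ^ 2 := by
    rw [pqInt_succ' hqp.ne']
    nlinarith [pow_pos hp0 (m + 1), mul_nonneg (sub_nonneg.2 hqp.le) hI]
  rw [Nat.add_sub_cancel]
  nlinarith [mul_le_mul_of_nonneg_left hdev (by positivity : 0 ≤ (p + q * x) * x ^ 2)]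

lemma mul_pow_add_mul_pqInt_le {n : ℕ} (hn : 1 ≤ n) {x : ℝ} (hx : 0 ≤ x) :
    x * (p ^ n + (p - q) * pqInt p q n) ≤
      (p ^ n / pqInt p q n + (p - q)) / q * ((1 + x) * pqInt p q (n + 1)) := by
  have hI := pqInt_pos hq.le hqp hn
  have hH : 0 ≤ (p ^ n / pqInt p q n + (p - q)) / q := by
    have := hq.trans hqp
    have := sub_nonneg.2 hqp.le
    positivity
  calc x * (p ^ n + (p - q) * pqInt p q n)
      = x * ((p ^ n / pqInt p q n + (p - q)) / q * (q * pqInt p q n)) := by field_simp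
    _ ≤ (1 + x) * ((p ^ n / pqInt p q n + (p - q)) / q * pqInt p q (n + 1)) := by
        gcongr
        · linarith
        · exact mul_pqInt_le_pqInt_succ hq hqp n
    _ = _ := by ring

lemma pqMoment_remainder_le (hp : p ≤ 1) {n : ℕ} (hn : 1 ≤ n) {x : ℝ} (hx : 0 ≤ x) :
    (1 + x) * (pqInt p q n * p ^ 2 * x * (p ^ n + q ^ n * x) +
          q * p ^ 3 * pqInt p q n * pqInt p q (n - 1) * x ^ 2) -
        2 * x ^ 2 * (p + q * x) * pqInt p q (n + 1) * (pqInt p q n * p) +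
        x ^ 2 * pqInt p q (n + 1) ^ 2 * (p + q * x) ≤
      pqMomentBound p q n * ((1 + x) ^ 2 * (p + q * x) * pqInt p q (n + 1) ^ 2) := by
  have hp0 : 0 < p := hq.trans hqp
  have hI : 0 < pqInt p q n := pqInt_pos hq.le hqp hn
  have hV := sq_mul_sq_pqInt_le hq hqp n
  set Y := 1 + x
  set P := p + q * x
  have hY : 0 < Y := by positivity
  have hP : 0 < P := by positivity
  have h₁ : Y * (pqInt p q n * p ^ 2 * x * p ^ n) ≤
      p * p ^ n / (q ^ 2 * pqInt p q n) * (Y ^ 2 * P * pqInt p q (n + 1) ^ 2) := by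
    have hpx : p * x ≤ Y * P := by
      nlinarith [mul_nonneg hq.le hx, mul_nonneg (mul_nonneg hq.le hx) hx]
    rw [div_mul_eq_mul_div, le_div_iff₀ (by positivity)]
    calc _ = Y * p * p ^ n * ((p * x) * (q ^ 2 * pqInt p q n ^ 2)) := by ring
      _ ≤ Y * p * p ^ n * ((Y * P) * pqInt p q (n + 1) ^ 2) := by gcongr
      _ = _ := by ring
  have h₂ : Y * (pqInt p q n * p ^ 2 * (q ^ n * x) * x) ≤
      1 / (q ^ 2 * n) * (Y ^ 2 * P * pqInt p q (n + 1) ^ 2) := by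
    have hqx : q * x ^ 2 ≤ Y * P := by nlinarith [mul_nonneg hq.le hx, mul_nonneg hp0.le hx]
    have hn0 : (0 : ℝ) < n := by exact_mod_cast hn
    rw [one_div_mul_eq_div, le_div_iff₀ (by positivity)]
    calc _ = p ^ 2 * Y * ((q * x ^ 2) * (n * q ^ (n + 1) * pqInt p q n)) := by ring
      _ ≤ 1 * Y * ((Y * P) * pqInt p q (n + 1) ^ 2) := by
          gcongr
          · exact pow_le_one₀ hp0.le hp
          · exact natCast_mul_pow_mul_pqInt_le hq hqp n
      _ = _ := by ring
  have h₃ : P * (x * (p ^ n + (p - q) * pqInt p q n)) ^ 2 ≤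
      ((p ^ n / pqInt p q n + (p - q)) / q) ^ 2 * (Y ^ 2 * P * pqInt p q (n + 1) ^ 2) := by
    have := mul_pow_add_mul_pqInt_le hq hqp hn hx
    have := mul_nonneg hx (add_nonneg (pow_pos hp0 n).le
      (mul_nonneg (sub_nonneg.2 hqp.le) hI.le))
    calc _ ≤ P * ((p ^ n / pqInt p q n + (p - q)) / q * (Y * pqInt p q (n + 1))) ^ 2 := by
          gcongr
      _ = _ := by ring
  rw [pqMomentBound]
  linear_combination h₁ + h₂ + h₃ + pqMoment_remainder_sq_le hq hqp hn hx

end MomentBound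

section Nodes

variable {p q : ℝ}

lemma pqEll_pos (hq : 0 ≤ q) (hqp : q < p) (n : ℕ) {x : ℝ} (hx : 0 ≤ x) : 0 < pqEll p q n x :=
  prod_pos fun s _ => by have := hq.trans_lt hqp; positivity

lemma pqNode_nonneg (hq : 0 ≤ q) (hqp : q < p) (n k : ℕ) : 0 ≤ pqNode p q n k := by
  have := pqInt_nonneg hq hqp k
  have := pqInt_nonneg hq hqp (n - k + 1)
  have := hq.trans hqp.le
  unfold pqNode
  positivity

variable (hq : 0 < q) (hqp : q < p)
include hq hqp

lemma pqNode_div_one_add {n k : ℕ} (hk : k ≤ n) :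
    pqNode p q n k / (1 + pqNode p q n k) = p ^ (n - k + 1) * pqInt p q k / pqInt p q (n + 1) := by
  have hsplit := pqInt_add hqp.ne' k (n - k + 1)
  rw [show k + (n - k + 1) = n + 1 by omega] at hsplit
  have := pqInt_pos hq.le hqp (n - k).succ_pos
  have := pqInt_pos hq.le hqp n.succ_pos
  have := pow_pos hq k
  rw [pqNode, hsplit]
  field_simp
  ring

variable (hp : p ≤ 1)
include hp

lemma sum_pqCoeff_mul_sq_pqNode_sub_le {n : ℕ} (hn : 1 ≤ n) {x : ℝ} (hx : 0 ≤ x) :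
    ∑ k ∈ range (n + 1), pqCoeff p q n k * x ^ k *
        (pqNode p q n k / (1 + pqNode p q n k) - x / (1 + x)) ^ 2 ≤
      pqMomentBound p q n * pqEll p q n x := by
  have hV := pqInt_pos hq.le hqp n.succ_pos
  have hP : 0 < p + q * x := by have := hq.trans hqp; positivity
  have hterm : ∀ k ∈ range (n + 1), pqCoeff p q n k * x ^ k *
      (pqNode p q n k / (1 + pqNode p q n k) - x / (1 + x)) ^ 2 =
        pqCoeff p q n k * x ^ k *
          ((1 + x) * (p ^ (n - k + 1) * pqInt p q k) - x * pqInt p q (n + 1)) ^ 2 /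
          ((1 + x) * pqInt p q (n + 1)) ^ 2 := fun k hk => by
    rw [pqNode_div_one_add hq hqp (Nat.lt_succ_iff.1 (mem_range.1 hk))]
    field_simp
  rw [sum_congr rfl hterm, ← sum_div, div_le_iff₀ (by positivity), ← mul_le_mul_iff_right₀ hP,
    pqCentralMoment_eq hq.le hqp]
  calc _ ≤ pqEll p q n x *
        (pqMomentBound p q n * ((1 + x) ^ 2 * (p + q * x) * pqInt p q (n + 1) ^ 2)) :=
      mul_le_mul_of_nonneg_left (pqMoment_remainder_le hq hqp hp hn hx)
        (pqEll_pos hq.le hqp n hx).le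
    _ = _ := by ring

end Nodes

namespace IsModulus

variable {ω : ℝ → ℝ} (hω : IsModulus ω)
include hω

lemma nonneg {δ : ℝ} (hδ : 0 ≤ δ) : 0 ≤ ω δ := hω.1 δ hδ

lemma mono {δ₁ δ₂ : ℝ} (hδ₁ : 0 ≤ δ₁) (h : δ₁ ≤ δ₂) : ω δ₁ ≤ ω δ₂ := hω.2.1 δ₁ δ₂ hδ₁ h

lemma map_zero : ω 0 = 0 :=
  le_antisymm (ge_of_tendsto hω.2.2.2 (eventually_nhdsWithin_of_forall fun _ hδ =>
    hω.mono le_rfl (le_of_lt hδ))) (hω.nonneg le_rfl)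

lemma natCast_mul_le (m : ℕ) {δ : ℝ} (hδ : 0 ≤ δ) : ω (m * δ) ≤ m * ω δ := by
  induction m with
  | zero => simp [hω.map_zero]
  | succ m ih =>
    push_cast
    rw [add_mul, one_mul, add_mul, one_mul]
    exact (hω.2.2.1 _ _ (by positivity) hδ).trans (by linarith)

lemma le_one_add_sq_div_sq_mul {δ d : ℝ} (hδ : 0 < δ) (hd : 0 ≤ d) :
    ω d ≤ (1 + d ^ 2 / δ ^ 2) * ω δ := by
  have hωδ := hω.nonneg hδ.le
  rcases le_or_gt d δ with hle | hlt
  · have : 0 ≤ d ^ 2 / δ ^ 2 := by positivity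
    nlinarith [hω.mono hd hle]
  · have hceil : (⌈d / δ⌉₊ : ℝ) ≤ d / δ + 1 := (Nat.ceil_lt_add_one (by positivity)).le
    have hsq : d / δ ≤ d ^ 2 / δ ^ 2 := by
      rw [← div_pow]
      nlinarith [(one_le_div hδ).2 hlt.le]
    calc ω d ≤ ω (⌈d / δ⌉₊ * δ) := hω.mono hd ((div_le_iff₀ hδ).1 (Nat.le_ceil _))
      _ ≤ ⌈d / δ⌉₊ * ω δ := hω.natCast_mul_le _ hδ.le
      _ ≤ (1 + d ^ 2 / δ ^ 2) * ω δ := by gcongr; linarith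

lemma sum_mul_le {ι : Type*} {s : Finset ι} {w e d : ι → ℝ} (hw : ∀ i ∈ s, 0 ≤ w i)
    (he : ∀ i ∈ s, e i ≤ ω |d i|) {δ : ℝ} (hδ : 0 < δ) :
    ∑ i ∈ s, w i * e i ≤ ω δ * (∑ i ∈ s, w i + (∑ i ∈ s, w i * d i ^ 2) / δ ^ 2) := by
  rw [sum_div, ← sum_add_distrib, mul_sum]
  refine sum_le_sum fun i hi => ?_
  calc w i * e i ≤ w i * ((1 + |d i| ^ 2 / δ ^ 2) * ω δ) :=
        mul_le_mul_of_nonneg_left ((he i hi).trans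
          (hω.le_one_add_sq_div_sq_mul hδ (abs_nonneg _))) (hw i hi)
    _ = ω δ * (w i + w i * d i ^ 2 / δ ^ 2) := by rw [sq_abs]; ring

end IsModulus

lemma MemHomega.abs_le {ω f : ℝ → ℝ} (hω : IsModulus ω) (hf : MemHomega ω f) {x : ℝ}
    (hx : 0 ≤ x) : |f x| ≤ |f 0| + ω 1 := by
  have hx1 : x / (1 + x) ≤ 1 := (div_le_one (by positivity)).2 (by linarith)
  have h := hf x 0 hx le_rfl
  rw [zero_div, sub_zero, abs_of_nonneg (a := x / (1 + x)) (by positivity)] at h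
  linarith [abs_sub_abs_le_abs_sub (f x) (f 0), hω.mono (by positivity) hx1]

lemma bbh_eq_sum (p q : ℝ) (n : ℕ) (f : ℝ → ℝ) (x : ℝ) :
    bbh p q n f x =
      p * q / pqEll p q n x *
        ∑ k ∈ range (n + 1), pqCoeff p q n k * x ^ k * f (pqNode p q n k) := by
  rw [bbh]
  congr 1
  exact sum_congr rfl fun k _ => by rw [pqCoeff]; ring

lemma bbh_sub_eq {p q : ℝ} (hq : 0 ≤ q) (hqp : q < p) (n : ℕ) (f : ℝ → ℝ) {x : ℝ}
    (hx : 0 ≤ x) :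
    bbh p q n f x - f x = p * q / pqEll p q n x *
      ∑ k ∈ range (n + 1), pqCoeff p q n k * x ^ k * (f (pqNode p q n k) - f x) -
        (1 - p * q) * f x := by
  have := (pqEll_pos hq hqp n hx).ne'
  simp only [bbh_eq_sum, mul_sub, sum_sub_distrib, ← sum_mul, sum_pqCoeff_mul_pow hq hqp]
  field_simp
  ring

lemma sum_pqCoeff_mul_abs_sub_le {p q : ℝ} (hq : 0 < q) (hqp : q < p) (hp : p ≤ 1)
    {ω f : ℝ → ℝ} (hω : IsModulus ω) (hf : MemHomega ω f) {n : ℕ} (hn : 1 ≤ n) {x : ℝ}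
    (hx : 0 ≤ x) {δ : ℝ} (hδ : 0 < δ) :
    ∑ k ∈ range (n + 1), pqCoeff p q n k * x ^ k * |f (pqNode p q n k) - f x| ≤
      ω δ * (1 + pqMomentBound p q n / δ ^ 2) * pqEll p q n x := by
  refine (hω.sum_mul_le (fun k _ => mul_nonneg (pqCoeff_nonneg hq.le hqp n k) (pow_nonneg hx k))
    (fun k _ => hf _ _ (pqNode_nonneg hq.le hqp n k) hx) hδ).trans ?_
  rw [sum_pqCoeff_mul_pow hq.le hqp]
  calc _ ≤ ω δ * (pqEll p q n x + pqMomentBound p q n * pqEll p q n x / δ ^ 2) := by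
        gcongr
        · exact hω.nonneg hδ.le
        · exact sum_pqCoeff_mul_sq_pqNode_sub_le hq hqp hp hn hx
    _ = _ := by ring

lemma abs_bbh_sub_le {p q : ℝ} (hq : 0 < q) (hqp : q < p) (hp : p ≤ 1) {ω f : ℝ → ℝ}
    (hω : IsModulus ω) (hf : MemHomega ω f) {n : ℕ} (hn : 1 ≤ n) {x : ℝ} (hx : 0 ≤ x)
    {δ : ℝ} (hδ : 0 < δ) :
    |bbh p q n f x - f x| ≤
      ω δ * (1 + pqMomentBound p q n / δ ^ 2) + (1 - p * q) * (|f 0| + ω 1) := by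
  set B := ω δ * (1 + pqMomentBound p q n / δ ^ 2)
  have hB : 0 ≤ B := by
    have := hω.nonneg hδ.le
    have := pqMomentBound_nonneg hq hqp n
    positivity
  have hℓ := pqEll_pos hq.le hqp n hx
  have hpq : 0 < p * q := mul_pos (hq.trans hqp) hq
  have hpq1 : p * q ≤ 1 := by nlinarith
  calc |bbh p q n f x - f x|
      ≤ p * q / pqEll p q n x *
          ∑ k ∈ range (n + 1), pqCoeff p q n k * x ^ k * |f (pqNode p q n k) - f x| +
          (1 - p * q) * |f x| := by
        rw [bbh_sub_eq hq.le hqp n f hx]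
        refine (abs_sub _ _).trans (add_le_add ?_ ?_)
        · rw [abs_mul, abs_of_pos (by positivity)]
          gcongr
          refine (abs_sum_le_sum_abs _ _).trans_eq (sum_congr rfl fun k _ => ?_)
          rw [abs_mul, abs_of_nonneg (mul_nonneg (pqCoeff_nonneg hq.le hqp n k) (pow_nonneg hx k))]
        · rw [abs_mul, abs_of_nonneg (by linarith)]
    _ ≤ p * q / pqEll p q n x * (B * pqEll p q n x) + (1 - p * q) * (|f 0| + ω 1) := by
        gcongr
        · exact sum_pqCoeff_mul_abs_sub_le hq hqp hp hω hf hn hx hδ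
        · exact hf.abs_le hω hx
    _ = p * q * B + (1 - p * q) * (|f 0| + ω 1) := by field_simp
    _ ≤ B + (1 - p * q) * (|f 0| + ω 1) := by nlinarith

section Limits

variable {p q : ℕ → ℝ} (hq : ∀ n, 0 < q n) (hqp : ∀ n, q n < p n) (hp : ∀ n, p n ≤ 1)
  (hql : Tendsto q atTop (nhds 1))
include hq hqp hp hql

-- For each fixed `m`, `[n] ≥ m q_n^m p_n^n` once `n ≥ m`, and `q_n^m → 1`.
lemma tendsto_pow_div_pqInt :
    Tendsto (fun n => p n ^ n / pqInt (p n) (q n) n) atTop (nhds 0) := by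
  have hp0 n : 0 < p n := (hq n).trans (hqp n)
  refine tendsto_order.2 ⟨fun a ha => Eventually.of_forall fun n => ha.trans_le
    (div_nonneg (pow_pos (hp0 n) n).le (pqInt_nonneg (hq n).le (hqp n) n)), fun ε hε => ?_⟩
  obtain ⟨m, hm⟩ := exists_nat_gt (2 / ε)
  have hm0 : 0 < m := by exact_mod_cast (by positivity : (0 : ℝ) < 2 / ε).trans hm
  have hqm : ∀ᶠ n in atTop, 1 / 2 < q n ^ m :=
    (tendsto_order.1 (by simpa using hql.pow m)).1 _ (by norm_num)
  filter_upwards [hqm, eventually_ge_atTop m] with n hqn hmn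
  have hεm : 2 < ε * m := by rwa [div_lt_iff₀ hε, mul_comm] at hm
  rw [div_lt_iff₀ (pqInt_pos (hq n).le (hqp n) (hm0.trans_le hmn))]
  calc p n ^ n = 1 * p n ^ n := (one_mul _).symm
    _ < (ε * m * q n ^ m) * p n ^ n := by
        gcongr
        · exact pow_pos (hp0 n) n
        · nlinarith
    _ = ε * (m * (q n ^ m * p n ^ n)) := by ring
    _ ≤ ε * pqInt (p n) (q n) n := by
        gcongr
        exact natCast_mul_pow_mul_pow_le_pqInt (hq n).le (hqp n) (hp n) hmn

lemma tendsto_pqMomentBound (hpl : Tendsto p atTop (nhds 1)) :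
    Tendsto (fun n => pqMomentBound (p n) (q n) n) atTop (nhds 0) := by
  have hG := tendsto_pow_div_pqInt hq hqp hp hql
  have hn : Tendsto (fun n : ℕ => (n : ℝ)⁻¹) atTop (nhds 0) :=
    tendsto_inv_atTop_zero.comp tendsto_natCast_atTop_atTop
  have := ((((hG.add (hpl.sub hql)).div hql one_ne_zero).pow 2).add
    (((hql.pow 2).inv₀ (by norm_num)).mul hn)).add ((hpl.mul hG).div (hql.pow 2) (by norm_num))
  simp only [sub_self, add_zero, zero_div, mul_zero, zero_pow two_ne_zero] at this
  refine this.congr fun n => ?_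
  simp only [Pi.div_apply, pqMomentBound, one_div, mul_inv]
  ring

end Limits

lemma StatConv.of_tendsto {a : ℕ → ℝ} {l : ℝ} (h : Tendsto a atTop (nhds l)) : StatConv a l := by
  intro ε hε
  obtain ⟨N, hN⟩ := Metric.tendsto_atTop.1 h ε hε
  have hcard (n : ℕ) : (#{k ∈ range (n + 1) | ε ≤ |a k - l|} : ℝ) ≤ N := by
    refine Nat.cast_le.2 ((card_le_card fun k hk => ?_).trans (card_range N).le)
    simp only [mem_filter, mem_range] at hk ⊢
    by_contra! hkN
    exact (hN k hkN).not_ge (by rw [Real.dist_eq]; exact hk.2)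
  exact squeeze_zero (fun n => by positivity)
    (fun n => div_le_div_of_nonneg_right (hcard n) n.cast_nonneg)
    (tendsto_const_div_atTop_nhds_zero_nat (N : ℝ))

theorem tendsto_iSup_abs_bbh_sub {p q : ℕ → ℝ} (hq : ∀ n, 0 < q n) (hqp : ∀ n, q n < p n)
    (hp : ∀ n, p n ≤ 1) (hpl : Tendsto p atTop (nhds 1)) (hql : Tendsto q atTop (nhds 1))
    {ω f : ℝ → ℝ} (hω : IsModulus ω) (hf : MemHomega ω f) :
    Tendsto (fun n => ⨆ x : {t : ℝ // 0 ≤ t}, |bbh (p n) (q n) n f x.1 - f x.1|)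
      atTop (nhds 0) := by
  refine tendsto_order.2 ⟨fun a ha => Eventually.of_forall fun n =>
    ha.trans_le (Real.iSup_nonneg fun _ => abs_nonneg _), fun ε hε => ?_⟩
  obtain ⟨δ, hωδ, hδ⟩ := ((tendsto_order.1 hω.2.2.2).2 (ε / 4) (by positivity)).and
    self_mem_nhdsWithin |>.exists
  have hD : ∀ᶠ n in atTop, pqMomentBound (p n) (q n) n < δ ^ 2 :=
    (tendsto_order.1 (tendsto_pqMomentBound hq hqp hp hql hpl)).2 _ (by positivity)
  have hc : ∀ᶠ n in atTop, (1 - p n * q n) * (|f 0| + ω 1) < ε / 4 := by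
    refine (tendsto_order.1 ?_).2 _ (by positivity)
    simpa using ((tendsto_const_nhds (x := (1 : ℝ))).sub (hpl.mul hql)).mul_const (|f 0| + ω 1)
  filter_upwards [hD, hc, eventually_ge_atTop 1] with n hDn hcn hn
  have hD1 : pqMomentBound (p n) (q n) n / δ ^ 2 ≤ 1 := by
    rw [div_le_one (by positivity)]; exact hDn.le
  calc (⨆ x : {t : ℝ // 0 ≤ t}, |bbh (p n) (q n) n f x.1 - f x.1|)
      ≤ ω δ * (1 + pqMomentBound (p n) (q n) n / δ ^ 2) + (1 - p n * q n) * (|f 0| + ω 1) :=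
        ciSup_le fun x => abs_bbh_sub_le (hq n) (hqp n) (hp n) hω hf hn x.2 hδ
    _ ≤ ω δ * 2 + (1 - p n * q n) * (|f 0| + ω 1) := by
        gcongr
        · exact hω.nonneg (le_of_lt hδ)
        · linarith
    _ < ε := by linarith

/-- Theorem 2.2, statistical Korovkin-type convergence. -/
theorem bbh_statConv (p q : ℕ → ℝ)
    (hq : ∀ n, 0 < q n) (hqp : ∀ n, q n < p n) (hp : ∀ n, p n ≤ 1)
    (hpl : Tendsto p atTop (nhds 1)) (hql : Tendsto q atTop (nhds 1))
    (ω : ℝ → ℝ) (hω : IsModulus ω) (f : ℝ → ℝ) (hf : MemHomega ω f) :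
    StatConv (fun n : ℕ =>
      ⨆ x : {t : ℝ // 0 ≤ t}, |bbh (p n) (q n) n f x.1 - f x.1|) 0 :=
  StatConv.of_tendsto (tendsto_iSup_abs_bbh_sub hq hqp hp hpl hql hω hf)
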